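/- The infinite product g(k) := ∏_{m≥1} (1/3)(1 + 2 cos(2πk / 2^m)) converges for every real k, and the convergence of the partial products to g is uniform on every compact subset of ℝ; in particular, g : ℝ → ℝ is continuous. -/

import Mathlib

open Filter Topology Real

noncomputable section

/-- The partial product ∏_{m=1}^{n} (1/3)(1 + 2 cos(2πk/2^m)). -/
noncomputable def sternProdPartial (n : ℕ) (k : ℝ) : ℝ :=
  ∏ m ∈ Finset.Icc 1 n, (1 / 3) * (1 + 2 * Real.cos (2 * π * k / 2 ^ m))

/-!
The `m`-th factor is `1 - (2/3)(1 - cos θₘ)` with `θₘ = 2πk/2^m`, and `1 - cos θ ≤ θ²/2`, so it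
differs from `1` by at most `(πk)²/3 · 4^(1-m)`. On a compact set these deviations are dominated
by a summable geometric sequence, so the product converges uniformly there (Weierstrass M-test for
products), and the limit is continuous as a locally uniform limit of continuous functions.
-/

def sternFactor (m : ℕ) (k : ℝ) : ℝ :=
  1 / 3 * (1 + 2 * cos (2 * π * k / 2 ^ m))

lemma sternProdPartial_eq_prod_range (n : ℕ) (k : ℝ) :
    sternProdPartial n k = ∏ m ∈ Finset.range n, sternFactor (m + 1) k := by
  rw [Finset.range_eq_Ico, Finset.prod_Ico_add' (sternFactor · k)]
  rfl

lemma continuous_sternFactor (m : ℕ) : Continuous (sternFactor m) := by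
  unfold sternFactor
  fun_prop

lemma continuous_sternProdPartial (n : ℕ) : Continuous (sternProdPartial n) := by
  simp_rw [funext (sternProdPartial_eq_prod_range n)]
  exact continuous_finsetProd _ fun m _ => continuous_sternFactor (m + 1)

lemma abs_one_third_mul_one_add_two_cos_sub_one_le (θ : ℝ) :
    |1 / 3 * (1 + 2 * cos θ) - 1| ≤ θ ^ 2 / 3 := by
  rw [abs_of_nonpos (by linarith [cos_le_one θ])]
  linarith [one_sub_sq_div_two_le_cos (x := θ)]

lemma abs_sternFactor_succ_sub_one_le {R k : ℝ} (hk : |k| ≤ R) (m : ℕ) :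
    |sternFactor (m + 1) k - 1| ≤ (π * R) ^ 2 / 3 * (1 / 4) ^ m := by
  have hθ : (2 * π * k / 2 ^ (m + 1)) ^ 2 = (π * k) ^ 2 * (1 / 4) ^ m := by
    rw [show (4 : ℝ) = 2 ^ 2 by norm_num, one_div_pow, ← pow_mul, pow_succ]
    field_simp
    ring
  have hkR : (π * k) ^ 2 ≤ (π * R) ^ 2 := by
    rw [mul_pow, mul_pow]
    exact mul_le_mul_of_nonneg_left (sq_le_sq.2 (hk.trans (le_abs_self R))) (sq_nonneg π)
  calc |sternFactor (m + 1) k - 1| ≤ (2 * π * k / 2 ^ (m + 1)) ^ 2 / 3 :=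
        abs_one_third_mul_one_add_two_cos_sub_one_le _
    _ = (π * k) ^ 2 / 3 * (1 / 4) ^ m := by rw [hθ]; ring
    _ ≤ (π * R) ^ 2 / 3 * (1 / 4) ^ m := by gcongr

lemma hasProdUniformlyOn_sternFactor_succ {K : Set ℝ} (hK : IsCompact K) :
    HasProdUniformlyOn (fun m k => sternFactor (m + 1) k) (fun k => ∏' m, sternFactor (m + 1) k)
      K := by
  obtain ⟨R, hR⟩ := hK.isBounded.subset_closedBall 0
  have hbound : ∀ᶠ m in atTop, ∀ k ∈ K,
      ‖sternFactor (m + 1) k - 1‖ ≤ (π * R) ^ 2 / 3 * (1 / 4) ^ m :=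
    Eventually.of_forall fun m k hk =>
      abs_sternFactor_succ_sub_one_le (by simpa using hR hk) m
  have hsum : Summable fun m : ℕ => (π * R) ^ 2 / 3 * (1 / 4 : ℝ) ^ m :=
    (summable_geometric_of_lt_one (by norm_num) (by norm_num)).mul_left _
  simpa using Summable.hasProdUniformlyOn_nat_one_add hK hsum hbound
    fun m => ((continuous_sternFactor (m + 1)).sub continuous_const).continuousOn

lemma tendstoUniformlyOn_sternProdPartial {K : Set ℝ} (hK : IsCompact K) :
    TendstoUniformlyOn sternProdPartial (fun k => ∏' m, sternFactor (m + 1) k) atTop K := by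
  convert (hasProdUniformlyOn_sternFactor_succ hK).tendstoUniformlyOn_finsetRange using 1
  exact funext fun n => funext (sternProdPartial_eq_prod_range n)

/-- The infinite product g(k) = ∏_{m≥1} (1/3)(1 + 2 cos(2πk/2^m)) converges for every real k,
uniformly on every compact subset of ℝ; in particular the limit g is continuous. -/
theorem sternProd_converges :
    ∃ g : ℝ → ℝ,
      (∀ k : ℝ, Tendsto (fun n => sternProdPartial n k) atTop (𝓝 (g k))) ∧
      (∀ K : Set ℝ, IsCompact K →
        TendstoUniformlyOn sternProdPartial g atTop K) ∧
      Continuous g := by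
  have huniform := fun K (hK : IsCompact K) => tendstoUniformlyOn_sternProdPartial hK
  refine ⟨_, fun k => (huniform {k} isCompact_singleton).tendsto_at rfl, huniform, ?_⟩
  exact (tendstoLocallyUniformly_iff_forall_isCompact.2 huniform).continuous
    (Frequently.of_forall continuous_sternProdPartial)
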